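/- Let N ≥ 2, let a₁ < ⋯ < a_N be points in [0, N), set u_{p,i} = a_{i+p} − a_i with convention a_{N+l} = a_l + N, and b_{p,i} = u_{p,i} − p. Then there is a universal constant C > 0 such that W(E_{a_i}) − W(ℤ) ≥ C ∑_{p=1}^{⌊N/2⌋} (1/N) ∑_{i=1}^N min(b_{p,i}²/p², 1), where W(E_{a_i}) = −(π/N) ∑_{i≠j} log|2 sin(π(a_i−a_j)/N)| − π log(2π/N) and W(ℤ) = −π log(2π). -/

import Mathlib

/-!
With `F x = log (2 sin x)` and `u p i = a (i + p) - a i`, periodicity rewrites the double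
sum as `∑_{p=1}^{N-1} ∑_i F (π u p i / N)`, and `∏_{p=1}^{N-1} 2 sin (π p / N) = N` rewrites
`N log N` as `∑_p N F (π p / N)`. Since `∑_i u p i = N p`, the energy gap `W - W(ℤ)` is
`π / N` times a sum over `p` of Jensen gaps of `F` around the mean `π p / N`.
Because `F'' = -1 / sin² ≤ -1 / x² = log''`, the function `F - log` is concave, so each
Jensen gap of `F` dominates the corresponding one of `log`, a sum of `t - 1 - log t` with
`t = u / p`; and `t - 1 - log t ≥ (√t - 1)² ≥ min ((t - 1)², 1) / 6`.
-/

open Real Finset Function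

lemma sq_sqrt_sub_one_le_sub_one_sub_log {x : ℝ} (hx : 0 < x) :
    (√x - 1) ^ 2 ≤ x - 1 - log x := by
  have hlog : log x = 2 * log √x := by rw [log_sqrt hx.le]; ring
  have hsq : √x ^ 2 = x := sq_sqrt hx.le
  nlinarith [log_le_sub_one_of_pos (sqrt_pos.2 hx)]

lemma min_sq_sub_one_div_six_le_sub_one_sub_log {x : ℝ} (hx : 0 < x) :
    min ((x - 1) ^ 2) 1 / 6 ≤ x - 1 - log x := by
  refine le_trans ?_ (sq_sqrt_sub_one_le_sub_one_sub_log hx)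
  -- the constant `6` works because `(√2 + 1)² ≤ 6` and `6 (√2 - 1)² ≥ 1`
  set s := √x
  have hs : 0 ≤ s := sqrt_nonneg x
  have hsq : x = s ^ 2 := (sq_sqrt hx.le).symm
  rcases le_or_gt x 2 with h | h
  · have : (x - 1) ^ 2 ≤ 6 * (s - 1) ^ 2 := by
      rw [hsq, show s ^ 2 - 1 = (s - 1) * (s + 1) by ring, mul_pow]
      have : (s + 1) ^ 2 ≤ 6 := by nlinarith
      nlinarith [sq_nonneg (s - 1)]
    linarith [min_le_left ((x - 1) ^ 2) 1]
  · have : 1 ≤ 6 * (s - 1) ^ 2 := by nlinarith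
    linarith [min_le_right ((x - 1) ^ 2) 1]

lemma ConcaveOn.le_add_mul_sub_of_hasDerivAt {S : Set ℝ} {f : ℝ → ℝ} {f' m x : ℝ}
    (hf : ConcaveOn ℝ S f) (hm : m ∈ S) (hx : x ∈ S) (hf' : HasDerivAt f f' m) :
    f x ≤ f m + f' * (x - m) := by
  rcases lt_trichotomy x m with h | rfl | h
  · have := hf.le_slope_of_hasDerivAt hx hm h hf'
    rw [slope_def_field, le_div_iff₀ (sub_pos.2 h)] at this
    linarith
  · simp
  · have := hf.slope_le_of_hasDerivAt hm hx h hf'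
    rw [slope_def_field, div_le_iff₀ (sub_pos.2 h)] at this
    linarith

lemma hasDerivAt_log_sin_sub_log {x : ℝ} (hx : x ∈ Set.Ioo 0 π) :
    HasDerivAt (fun y ↦ log (sin y) - log y) (cos x / sin x - x⁻¹) x :=
  ((hasDerivAt_sin x).log (sin_pos_of_pos_of_lt_pi hx.1 hx.2).ne').sub
    (hasDerivAt_log hx.1.ne')

lemma hasDerivAt_cos_div_sin_sub_inv {x : ℝ} (hx : x ∈ Set.Ioo 0 π) :
    HasDerivAt (fun y ↦ cos y / sin y - y⁻¹) (x⁻¹ ^ 2 - (sin x ^ 2)⁻¹) x := by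
  have hsin := (sin_pos_of_pos_of_lt_pi hx.1 hx.2).ne'
  refine (((hasDerivAt_cos x).div (hasDerivAt_sin x) hsin).sub
    (hasDerivAt_inv hx.1.ne')).congr_deriv ?_
  field_simp
  linear_combination -sin_sq_add_cos_sq x

lemma antitoneOn_cos_div_sin_sub_inv :
    AntitoneOn (fun x ↦ cos x / sin x - x⁻¹) (Set.Ioo 0 π) := by
  refine antitoneOn_of_hasDerivWithinAt_nonpos (convex_Ioo 0 π)
    (f' := fun x ↦ x⁻¹ ^ 2 - (sin x ^ 2)⁻¹)
    (fun x hx ↦ (hasDerivAt_cos_div_sin_sub_inv hx).continuousAt.continuousWithinAt)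
    (fun x hx ↦ ?_) (fun x hx ↦ ?_) <;> rw [interior_Ioo] at hx
  · exact (hasDerivAt_cos_div_sin_sub_inv hx).hasDerivWithinAt
  · have hsin := sin_pos_of_pos_of_lt_pi hx.1 hx.2
    rw [sub_nonpos, inv_pow]
    exact inv_anti₀ (by positivity) (pow_le_pow_left₀ hsin.le (sin_le hx.1.le) 2)

lemma concaveOn_log_sin_sub_log : ConcaveOn ℝ (Set.Ioo 0 π) (fun x ↦ log (sin x) - log x) := by
  refine AntitoneOn.concaveOn_of_deriv (convex_Ioo 0 π)
    (fun x hx ↦ (hasDerivAt_log_sin_sub_log hx).continuousAt.continuousWithinAt) ?_ ?_ <;>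
    rw [interior_Ioo]
  · exact fun x hx ↦ (hasDerivAt_log_sin_sub_log hx).differentiableAt.differentiableWithinAt
  · exact antitoneOn_cos_div_sin_sub_inv.congr fun x hx ↦
      (hasDerivAt_log_sin_sub_log hx).deriv.symm

lemma log_two_sin_le_tangent_sub {m x : ℝ} (hm : m ∈ Set.Ioo 0 π) (hx : x ∈ Set.Ioo 0 π) :
    log (2 * sin x) ≤ log (2 * sin m) + cos m / sin m * (x - m) - (x / m - 1 - log (x / m)) := by
  have h := concaveOn_log_sin_sub_log.le_add_mul_sub_of_hasDerivAt hm hx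
    (hasDerivAt_log_sin_sub_log hm)
  have hm0 := hm.1.ne'
  rw [log_mul two_ne_zero (sin_pos_of_pos_of_lt_pi hx.1 hx.2).ne',
    log_mul two_ne_zero (sin_pos_of_pos_of_lt_pi hm.1 hm.2).ne', log_div hx.1.ne' hm0]
  have : x / m - 1 = m⁻¹ * (x - m) := by field_simp
  rw [this]
  linarith

lemma min_sq_div_six_le_log_two_sin_gap {m x : ℝ} (hm : m ∈ Set.Ioo 0 π)
    (hx : x ∈ Set.Ioo 0 π) :
    min ((x / m - 1) ^ 2) 1 / 6 ≤
      log (2 * sin m) + cos m / sin m * (x - m) - log (2 * sin x) := by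
  linarith [log_two_sin_le_tangent_sub hm hx,
    min_sq_sub_one_div_six_le_sub_one_sub_log (div_pos hx.1 hm.1)]

lemma sum_min_sq_div_six_le_jensen_gap_log_two_sin {ι : Type*} (s : Finset ι) (x : ι → ℝ)
    {m : ℝ} (hm : m ∈ Set.Ioo 0 π) (hx : ∀ i ∈ s, x i ∈ Set.Ioo 0 π)
    (hsum : ∑ i ∈ s, x i = #s * m) :
    (∑ i ∈ s, min ((x i / m - 1) ^ 2) 1) / 6 ≤
      #s * log (2 * sin m) - ∑ i ∈ s, log (2 * sin (x i)) := by
  have h := sum_le_sum fun i hi ↦ min_sq_div_six_le_log_two_sin_gap hm (hx i hi)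
  rw [← sum_div] at h
  refine h.trans_eq ?_
  rw [sum_sub_distrib, sum_add_distrib, ← mul_sum, sum_sub_distrib, hsum]
  simp

lemma prod_abs_two_sin_pi_mul_div (n : ℕ) :
    ∏ k ∈ range n, |2 * sin (π * (k + 1) / (n + 1))| = n + 1 := by
  have hμ := Complex.isPrimitiveRoot_exp (n + 1) n.succ_ne_zero
  have h := congrArg (‖·‖) hμ.prod_one_sub_pow_eq_order
  simp only [norm_prod] at h
  convert h using 1
  · refine prod_congr rfl fun k _ ↦ ?_
    have hpow : Complex.exp (2 * π * Complex.I / ↑(n + 1)) ^ (k + 1) =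
        Complex.exp (Complex.I * ↑(2 * π * (k + 1) / (n + 1))) := by
      rw [← Complex.exp_nat_mul]; push_cast; ring_nf
    rw [norm_sub_rev, hpow, Complex.norm_exp_I_mul_ofReal_sub_one, Real.norm_eq_abs]
    ring_nf
  · norm_cast

lemma sum_log_two_sin_pi_mul_div (N : ℕ) :
    ∑ p ∈ Icc 1 (N - 1), log (2 * sin (π * p / N)) = log N := by
  rcases N with _ | n
  · simp
  have h := prod_abs_two_sin_pi_mul_div n
  have hne : ∀ k ∈ range n, |2 * sin (π * (k + 1) / (n + 1))| ≠ 0 :=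
    prod_ne_zero_iff.1 (by rw [h]; positivity)
  rw [Nat.add_sub_cancel, ← Finset.Ico_add_one_right_eq_Icc, sum_Ico_eq_sum_range,
    Nat.add_sub_cancel]
  have := congrArg log h
  rw [log_prod hne] at this
  push_cast
  simpa only [log_abs, add_comm] using this

lemma Function.Periodic.sum_range_add {M : Type*} [AddCommMonoid M] {g : ℕ → M} {N : ℕ}
    (hg : Periodic g N) (k : ℕ) : ∑ i ∈ range N, g (i + k) = ∑ i ∈ range N, g i := by
  induction k generalizing g with
  | zero => rfl
  | succ k ih =>
    have hstep : ∑ i ∈ range N, g (i + 1) = ∑ i ∈ range N, g i := by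
      rcases N with _ | n
      · rfl
      · have hwrap : g (n + 1) = g 0 := by simpa using hg 0
        rw [sum_range_succ, sum_range_succ' g, hwrap]
    rw [← hstep, ← ih (hg.add_const 1)]
    simp only [add_assoc]

lemma Function.Periodic.sum_Icc_add {M : Type*} [AddCommMonoid M] {g : ℕ → M} {N : ℕ}
    (hg : Periodic g N) (k : ℕ) : ∑ i ∈ Icc 1 N, g (i + k) = ∑ i ∈ Icc 1 N, g i := by
  simp only [← Finset.Ico_add_one_right_eq_Icc, sum_Ico_eq_sum_range, Nat.add_sub_cancel]
  simp_rw [add_comm 1, add_right_comm _ 1 k]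
  exact (hg.add_const 1).sum_range_add k

lemma pi_mul_div_mem_Ioo {x y : ℝ} (hx : x ∈ Set.Ioo 0 y) : π * x / y ∈ Set.Ioo 0 π := by
  have hy : 0 < y := hx.1.trans hx.2
  refine ⟨div_pos (mul_pos pi_pos hx.1) hy, ?_⟩
  rw [div_lt_iff₀ hy]
  nlinarith [pi_pos, hx.2]

section Spacings

variable {N : ℕ} {a : ℕ → ℝ}

lemma periodic_sub_id (hper : ∀ i, a (i + N) = a i + N) : Periodic (fun i ↦ a i - i) N := by
  intro i
  simp only [hper]
  push_cast
  ring

lemma sum_Icc_spacing (hper : ∀ i, a (i + N) = a i + N) (p : ℕ) :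
    ∑ i ∈ Icc 1 N, (a (i + p) - a i) = N * p := by
  have h := (periodic_sub_id hper).sum_Icc_add p
  rw [← sub_eq_zero, ← sum_sub_distrib] at h
  have : ∀ i ∈ Icc 1 N, a (i + p) - a i = (a (i + p) - ↑(i + p) - (a i - i)) + p := by
    intro i _; push_cast; ring
  rw [sum_congr rfl this, sum_add_distrib, h]
  simp

lemma spacing_mem_Ioo (hper : ∀ i, a (i + N) = a i + N)
    (hmono : ∀ i j, 1 ≤ i → i < j → j ≤ N → a i < a j)
    (hrange : ∀ i, 1 ≤ i → i ≤ N → a i ∈ Set.Ico (0 : ℝ) N)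
    {p i : ℕ} (hp : p ∈ Icc 1 (N - 1)) (hi : i ∈ Icc 1 N) :
    a (i + p) - a i ∈ Set.Ioo 0 (N : ℝ) := by
  rw [mem_Icc] at hp hi
  have hai := hrange i hi.1 hi.2
  rcases le_or_gt (i + p) N with h | h
  · have hlt := hmono i (i + p) hi.1 (by omega) h
    have haip := hrange (i + p) (by omega) h
    constructor <;> linarith [haip.2, hai.1]
  · obtain ⟨j, hj⟩ : ∃ j, i + p = j + N := ⟨i + p - N, by omega⟩
    have hlt := hmono j i (by omega) (by omega) hi.2
    have haj := hrange j (by omega) (by omega)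
    rw [hj, hper]
    constructor <;> linarith [haj.1, hai.2]

lemma sum_min_sq_spacing_div_six_le (hper : ∀ i, a (i + N) = a i + N)
    (hmono : ∀ i j, 1 ≤ i → i < j → j ≤ N → a i < a j)
    (hrange : ∀ i, 1 ≤ i → i ≤ N → a i ∈ Set.Ico (0 : ℝ) N) {p : ℕ}
    (hp : p ∈ Icc 1 (N - 1)) :
    (∑ i ∈ Icc 1 N, min ((a (i + p) - a i - p) ^ 2 / p ^ 2) 1) / 6 ≤
      N * log (2 * sin (π * p / N)) -
        ∑ i ∈ Icc 1 N, log (2 * sin (π * (a (i + p) - a i) / N)) := by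
  have hp' := mem_Icc.1 hp
  have hp0 : (0 : ℝ) < p := by exact_mod_cast hp'.1
  have hpN : (p : ℝ) ∈ Set.Ioo 0 (N : ℝ) := ⟨hp0, by exact_mod_cast (by omega : p < N)⟩
  have hN : (N : ℝ) ≠ 0 := (hp0.trans hpN.2).ne'
  have h := sum_min_sq_div_six_le_jensen_gap_log_two_sin (Icc 1 N)
    (fun i ↦ π * (a (i + p) - a i) / N) (pi_mul_div_mem_Ioo hpN)
    (fun i hi ↦ pi_mul_div_mem_Ioo (spacing_mem_Ioo hper hmono hrange hp hi)) (by
      rw [← sum_div, ← mul_sum, sum_Icc_spacing hper, Nat.card_Icc, Nat.add_sub_cancel]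
      field_simp)
  rw [Nat.card_Icc, Nat.add_sub_cancel] at h
  convert h using 4 with i
  field_simp

lemma periodic_log_abs_two_sin (hper : ∀ i, a (i + N) = a i + N) (hN : N ≠ 0) (x : ℝ) :
    Periodic (fun j ↦ log |2 * sin (π * (x - a j) / N)|) N := by
  intro j
  have : π * (x - a (j + N)) / N = π * (x - a j) / N - π := by
    rw [hper]; field_simp; ring
  simp only [this, sin_sub_pi, mul_neg, abs_neg]

lemma sum_ne_log_abs_two_sin_eq (hper : ∀ i, a (i + N) = a i + N) (hN : 0 < N) (i : ℕ) :
    ∑ j ∈ Icc 1 N, (if i ≠ j then log |2 * sin (π * (a i - a j) / N)| else 0) =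
      ∑ p ∈ Icc 1 (N - 1), log (2 * sin (π * (a (i + p) - a i) / N)) := by
  set G := fun j ↦ log |2 * sin (π * (a i - a j) / N)|
  -- Lean's `log 0 = 0` makes the diagonal term vanish, so the `if` can be dropped
  have hGi : G i = 0 := by simp [G]
  have hGper : Periodic G N := periodic_log_abs_two_sin hper hN.ne' (a i)
  calc ∑ j ∈ Icc 1 N, (if i ≠ j then G j else 0)
      = ∑ j ∈ Icc 1 N, G j := sum_congr rfl fun j _ ↦ by
        rcases eq_or_ne i j with rfl | h
        · simp [hGi]
        · simp [h]
    _ = ∑ p ∈ Icc 1 N, G (p + i) := (hGper.sum_Icc_add i).symm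
    _ = ∑ p ∈ Icc 1 (N - 1), G (p + i) := by
        obtain ⟨n, rfl⟩ : ∃ n, N = n + 1 := ⟨N - 1, by omega⟩
        rw [sum_Icc_succ_top (by omega), add_comm (n + 1), hGper, hGi, add_zero,
          Nat.add_sub_cancel]
    _ = _ := sum_congr rfl fun p _ ↦ by
        simp only [G]
        rw [log_abs, add_comm p, ← neg_sub, mul_neg, neg_div, sin_neg, mul_neg, log_neg_eq_log]

lemma sum_sum_ne_log_abs_two_sin_eq (hper : ∀ i, a (i + N) = a i + N) (hN : 0 < N) :
    ∑ i ∈ Icc 1 N, ∑ j ∈ Icc 1 N,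
        (if i ≠ j then log |2 * sin (π * (a i - a j) / N)| else 0) =
      ∑ p ∈ Icc 1 (N - 1), ∑ i ∈ Icc 1 N, log (2 * sin (π * (a (i + p) - a i) / N)) := by
  simp only [sum_ne_log_abs_two_sin_eq hper hN]
  exact sum_comm

end Spacings

theorem quantitative_crystallization :
    ∃ C > (0 : ℝ), ∀ (N : ℕ), 2 ≤ N → ∀ a : ℕ → ℝ,
      (∀ i, a (i + N) = a i + N) →
      (∀ i j, 1 ≤ i → i < j → j ≤ N → a i < a j) →
      (∀ i, 1 ≤ i → i ≤ N → a i ∈ Set.Ico (0 : ℝ) N) →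
      (-(Real.pi / N) * (∑ i ∈ Finset.Icc 1 N, ∑ j ∈ Finset.Icc 1 N,
            if i ≠ j then Real.log |2 * Real.sin (Real.pi * (a i - a j) / N)| else 0) -
          Real.pi * Real.log (2 * Real.pi / N)) - (-Real.pi * Real.log (2 * Real.pi)) ≥
        C * ∑ p ∈ Finset.Icc 1 (N / 2), (1 / (N : ℝ)) *
          ∑ i ∈ Finset.Icc 1 N, min ((a (i + p) - a i - (p : ℝ)) ^ 2 / (p : ℝ) ^ 2) 1 := by
  refine ⟨π / 6, by positivity, fun N hN a hper hmono hrange ↦ ?_⟩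
  have hN0 : (0 : ℝ) < N := by positivity
  have hgap : ∑ p ∈ Icc 1 (N / 2),
        (∑ i ∈ Icc 1 N, min ((a (i + p) - a i - p) ^ 2 / p ^ 2) 1) / 6 ≤
      N * log N -
        ∑ p ∈ Icc 1 (N - 1), ∑ i ∈ Icc 1 N, log (2 * sin (π * (a (i + p) - a i) / N)) := by
    rw [← sum_log_two_sin_pi_mul_div, mul_sum, ← sum_sub_distrib]
    exact (sum_le_sum_of_subset_of_nonneg (Icc_subset_Icc_right (by omega))
      fun _ _ _ ↦ by positivity).trans
      (sum_le_sum fun p hp ↦ sum_min_sq_spacing_div_six_le hper hmono hrange hp)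
  rw [sum_sum_ne_log_abs_two_sin_eq hper (by omega), log_div (by positivity) hN0.ne',
    ge_iff_le]
  calc π / 6 * ∑ p ∈ Icc 1 (N / 2), 1 / (N : ℝ) *
        ∑ i ∈ Icc 1 N, min ((a (i + p) - a i - p) ^ 2 / p ^ 2) 1
      = π / N * ∑ p ∈ Icc 1 (N / 2),
          (∑ i ∈ Icc 1 N, min ((a (i + p) - a i - p) ^ 2 / p ^ 2) 1) / 6 := by
        rw [mul_sum, mul_sum]
        exact sum_congr rfl fun p _ ↦ by field_simp
    _ ≤ π / N * (N * log N -
          ∑ p ∈ Icc 1 (N - 1), ∑ i ∈ Icc 1 N, log (2 * sin (π * (a (i + p) - a i) / N))) :=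
        by gcongr
    _ = _ := by
        field_simp
        ring
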